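/- arXiv:1210.4627 — 4 statements merged into one kernel-verified Lean document; each statement's English description precedes it below -/
import Mathlib

section
/- Let U(z) be a p×p matrix-valued function analytic in a neighborhood of z₀, and let λ₀ be an eigenvalue of U(z₀). Suppose (E1) the λ₀-group of perturbed eigenvalues of U(z) consists of 2N eigenvalues λ_1(z), …, λ_{2N}(z), each of algebraic multiplicity 1 for z ≠ z₀ near z₀, forming N cycles of period 2 with Puiseux expansions λ_{2s}(z) = λ₀ + c_s (z−z₀)^{1/2} + O(z−z₀), λ_{2s+1}(z) = λ₀ − c_s (z−z₀)^{1/2} + O(z−z₀) with c_s ≠ 0; and (E2) corresponding eigenvectors can be chosen as g_{2s}(z) = h_s + (z−z₀)^{1/2} k_{2s} + O(z−z₀), g_{2s+1}(z) = h_s + (z−z₀)^{1/2} k_{2s+1} + O(z−z₀), where h_1, …, h_N are linearly independent constant vectors. Then in the Jordan normal form of U(z₀), the Jordan blocks corresponding to the eigenvalue λ₀ are exactly N blocks, each of size 2×2. -/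
/-!
Differentiating the eigen-relation `U(z₀ + w²) g(w) = λ(w) g(w)` at `w = 0` along one branch of
each cycle gives `(U(z₀) - λ₀) h_s = 0` and `(U(z₀) - λ₀) k_{2s} = c_s h_s`, because the derivative
of `w ↦ U(z₀ + w²)` vanishes at `0`. As `c_s ≠ 0`, the `2N` vectors `h_s, k_{2s}` are linearly
independent, so `ker (U(z₀) - λ₀)²` has dimension at least `2N`. The algebraic multiplicity `2N`
bounds every `ker (U(z₀) - λ₀)^m` from above, which forces equality and stabilisation at `m = 2`;
rank–nullity for `U(z₀) - λ₀` on `ker (U(z₀) - λ₀)²` then gives `dim ker (U(z₀) - λ₀) = N`.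
-/

open Module Matrix Topology

namespace Module.End

variable {K V ι : Type*} [Field K] [AddCommGroup V] [Module K V] [Fintype ι]
  {T : End K V} {h k : ι → V} {c : ι → K}

lemma linearIndependent_sum_elim_of_jordan_chains (hTh : ∀ s, T (h s) = 0)
    (hTk : ∀ s, T (k s) = c s • h s) (hc : ∀ s, c s ≠ 0) (hind : LinearIndependent K h) :
    LinearIndependent K (Sum.elim h k) := by
  rw [Fintype.linearIndependent_iff]
  intro a ha
  rw [Fintype.sum_sum_type] at ha
  have ha_inr : ∀ s, a (Sum.inr s) = 0 := by
    have hT : ∑ s, (a (Sum.inr s) * c s) • h s = 0 := by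
      simpa [map_sum, hTh, hTk, smul_smul] using congrArg T ha
    exact fun s =>
      (mul_eq_zero.mp (Fintype.linearIndependent_iff.mp hind _ hT s)).resolve_right (hc s)
  have ha_inl : ∀ s, a (Sum.inl s) = 0 :=
    Fintype.linearIndependent_iff.mp hind _ (by simpa [ha_inr] using ha)
  rintro (s | s)
  exacts [ha_inl s, ha_inr s]

variable [FiniteDimensional K V]

lemma card_le_finrank_of_linearIndependent_mem {S : Submodule K V} {v : ι → V}
    (hv : LinearIndependent K v) (hS : ∀ i, v i ∈ S) : Fintype.card ι ≤ finrank K S := by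
  rw [← finrank_span_eq_card hv]
  exact Submodule.finrank_mono (Submodule.span_le.mpr (Set.range_subset_iff.mpr hS))

lemma finrank_ker_sq_eq_of_jordan_chains (hTh : ∀ s, T (h s) = 0)
    (hTk : ∀ s, T (k s) = c s • h s) (hc : ∀ s, c s ≠ 0) (hind : LinearIndependent K h)
    (hbound : finrank K (LinearMap.ker (T ^ 2)) ≤ 2 * Fintype.card ι) :
    finrank K (LinearMap.ker (T ^ 2)) = 2 * Fintype.card ι := by
  refine hbound.antisymm ?_
  have hmem : ∀ i, Sum.elim h k i ∈ LinearMap.ker (T ^ 2) := by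
    rintro (s | s) <;> simp [sq, hTh, hTk]
  simpa [two_mul] using card_le_finrank_of_linearIndependent_mem
    (linearIndependent_sum_elim_of_jordan_chains hTh hTk hc hind) hmem

lemma finrank_ker_eq_of_jordan_chains (hTh : ∀ s, T (h s) = 0)
    (hTk : ∀ s, T (k s) = c s • h s) (hc : ∀ s, c s ≠ 0) (hind : LinearIndependent K h)
    (hbound : finrank K (LinearMap.ker (T ^ 2)) ≤ 2 * Fintype.card ι) :
    finrank K (LinearMap.ker T) = Fintype.card ι := by
  have hsq := finrank_ker_sq_eq_of_jordan_chains hTh hTk hc hind hbound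
  let S := T ∘ₗ (LinearMap.ker (T ^ 2)).subtype
  have hkerS : finrank K (LinearMap.ker S) = finrank K (LinearMap.ker T) := by
    rw [LinearMap.ker_comp]
    have hle : LinearMap.ker T ≤ LinearMap.ker (T ^ 2) := by
      rw [sq, Module.End.mul_eq_comp]
      exact LinearMap.ker_le_ker_comp T T
    exact (Submodule.comapSubtypeEquivOfLe hle).finrank_eq
  have hrangeS : Fintype.card ι ≤ finrank K (LinearMap.range S) := by
    refine card_le_finrank_of_linearIndependent_mem hind fun s => ?_
    refine ⟨⟨(c s)⁻¹ • k s, ?_⟩, ?_⟩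
    · simp [sq, hTh, hTk]
    · simp [S, hTk, smul_smul, hc s]
  have hlow : Fintype.card ι ≤ finrank K (LinearMap.ker T) :=
    card_le_finrank_of_linearIndependent_mem hind fun s => hTh s
  have := LinearMap.finrank_range_add_finrank_ker S
  omega

lemma ker_pow_three_eq_ker_sq_of_jordan_chains (hTh : ∀ s, T (h s) = 0)
    (hTk : ∀ s, T (k s) = c s • h s) (hc : ∀ s, c s ≠ 0) (hind : LinearIndependent K h)
    (hbound : ∀ n, finrank K (LinearMap.ker (T ^ n)) ≤ 2 * Fintype.card ι) :
    LinearMap.ker (T ^ 3) = LinearMap.ker (T ^ 2) := by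
  have hle : LinearMap.ker (T ^ 2) ≤ LinearMap.ker (T ^ 3) := T.iterateKer.monotone (by norm_num)
  refine (Submodule.eq_of_le_of_finrank_le hle ?_).symm
  rw [finrank_ker_sq_eq_of_jordan_chains hTh hTk hc hind (hbound 2)]
  exact hbound 3

end Module.End

lemma Matrix.finrank_ker_toLin'_sub_smul_one_pow_le {n : Type*} [Fintype n] [DecidableEq n]
    {K : Type*} [Field K] (A : Matrix n n K) (μ : K) (m : ℕ) :
    finrank K (LinearMap.ker (toLin' (A - μ • 1) ^ m)) ≤ A.charpoly.rootMultiplicity μ := by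
  rw [map_sub, map_smul, toLin'_one, ← Module.End.one_eq_id, ← Module.End.genEigenspace_nat,
    ← charpoly_toLin']
  exact LinearMap.finrank_genEigenspace_le _ μ m

lemma hasDerivAt_mulVec {𝕜 n : Type*} [NontriviallyNormedField 𝕜] [Fintype n]
    {M : 𝕜 → Matrix n n 𝕜} {M' : Matrix n n 𝕜} {v : 𝕜 → n → 𝕜} {v' : n → 𝕜} {x : 𝕜}
    (hM : ∀ i j, HasDerivAt (fun w => M w i j) (M' i j) x) (hv : HasDerivAt v v' x) :
    HasDerivAt (fun w => M w *ᵥ v w) (M x *ᵥ v' + M' *ᵥ v x) x := by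
  rw [hasDerivAt_pi] at hv ⊢
  intro i
  simpa [Matrix.mulVec, dotProduct, Finset.sum_add_distrib, add_comm] using
    HasDerivAt.fun_sum (u := Finset.univ) fun j _ => (hM i j).mul (hv j)

lemma mulVec_add_eq_of_eventually_mulVec_eq_smul {𝕜 n : Type*} [NontriviallyNormedField 𝕜]
    [Fintype n] {M : 𝕜 → Matrix n n 𝕜} {M' : Matrix n n 𝕜} {v : 𝕜 → n → 𝕜} {v' : n → 𝕜}
    {Λ : 𝕜 → 𝕜} {Λ' x : 𝕜}
    (hM : ∀ i j, HasDerivAt (fun w => M w i j) (M' i j) x) (hv : HasDerivAt v v' x)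
    (hΛ : HasDerivAt Λ Λ' x) (heig : ∀ᶠ w in 𝓝 x, M w *ᵥ v w = Λ w • v w) :
    M x *ᵥ v' + M' *ᵥ v x = Λ x • v' + Λ' • v x :=
  ((hasDerivAt_mulVec hM hv).congr_of_eventuallyEq (heig.mono fun _ hw => hw.symm)).unique
    (hΛ.smul hv)

lemma jordan_chain_of_eigenbranch {𝕜 n : Type*} [NontriviallyNormedField 𝕜] [Fintype n]
    [DecidableEq n] {U : 𝕜 → Matrix n n 𝕜} {z₀ μ c : 𝕜} {Λ : 𝕜 → 𝕜} {G : 𝕜 → n → 𝕜}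
    {h k : n → 𝕜} (hU : ∀ i j, DifferentiableAt 𝕜 (fun z => U z i j) z₀)
    (hΛ : HasDerivAt Λ c 0) (hΛ0 : Λ 0 = μ) (hG : HasDerivAt G k 0) (hG0 : G 0 = h)
    (heig : ∀ᶠ w in 𝓝 0, U (z₀ + w ^ 2) *ᵥ G w = Λ w • G w) :
    (U z₀ - μ • 1) *ᵥ h = 0 ∧ (U z₀ - μ • 1) *ᵥ k = c • h := by
  have hM : ∀ i j, HasDerivAt (fun w => U (z₀ + w ^ 2) i j) ((0 : Matrix n n 𝕜) i j) 0 :=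
    fun i j => by
      have hsq : HasDerivAt (fun w : 𝕜 => z₀ + w ^ 2) 0 0 := by
        simpa using (hasDerivAt_pow 2 (0 : 𝕜)).const_add z₀
      simpa [Function.comp_def] using (hU i j).hasDerivAt.comp_of_eq 0 hsq (by simp)
  have h0 := heig.self_of_nhds
  have h1 := mulVec_add_eq_of_eventually_mulVec_eq_smul hM hG hΛ heig
  simp only [ne_eq, OfNat.ofNat_ne_zero, not_false_eq_true, zero_pow, add_zero, zero_mulVec,
    hΛ0, hG0] at h0 h1
  simp only [sub_mulVec, smul_mulVec, one_mulVec, h0, h1, sub_self, add_sub_cancel_left, true_and]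

theorem stmt4_general (p N : ℕ) (z₀ lam₀ : ℂ)
    (U : ℂ → Matrix (Fin p) (Fin p) ℂ)
    (hU : ∀ i j, AnalyticAt ℂ (fun z => U z i j) z₀)
    (Λp : Fin N → ℂ → ℂ) (c : Fin N → ℂ) (hc : ∀ s, c s ≠ 0)
    (Gp : Fin N → ℂ → (Fin p → ℂ))
    (h kp : Fin N → (Fin p → ℂ))
    (hΛp : ∀ s, AnalyticAt ℂ (Λp s) 0 ∧ Λp s 0 = lam₀ ∧ deriv (Λp s) 0 = c s)
    (hGp : ∀ s i, AnalyticAt ℂ (fun w => Gp s w i) 0 ∧ Gp s 0 i = h s i ∧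
      deriv (fun w => Gp s w i) 0 = kp s i)
    (heigp : ∀ s, ∀ᶠ w in nhds (0 : ℂ),
      (U (z₀ + w ^ 2)).mulVec (Gp s w) = Λp s w • Gp s w)
    (hind : LinearIndependent ℂ h)
    (halg : ((U z₀).charpoly).rootMultiplicity lam₀ = 2 * N) :
    Module.finrank ℂ (LinearMap.ker (Matrix.toLin' (U z₀ - lam₀ • 1))) = N ∧
    Module.finrank ℂ (LinearMap.ker ((Matrix.toLin' (U z₀ - lam₀ • 1)) ^ 2)) = 2 * N ∧
    LinearMap.ker ((Matrix.toLin' (U z₀ - lam₀ • 1)) ^ 3)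
      = LinearMap.ker ((Matrix.toLin' (U z₀ - lam₀ • 1)) ^ 2) := by
  set T := toLin' (U z₀ - lam₀ • 1)
  have hchain : ∀ s, T (h s) = 0 ∧ T (kp s) = c s • h s := fun s => by
    obtain ⟨hΛa, hΛ0, hΛ'⟩ := hΛp s
    have hG : HasDerivAt (Gp s) (kp s) 0 := hasDerivAt_pi.mpr fun i =>
      (hGp s i).2.2 ▸ (hGp s i).1.differentiableAt.hasDerivAt
    have hG0 : Gp s 0 = h s := funext fun i => (hGp s i).2.1
    simpa only [T, toLin'_apply] using
      jordan_chain_of_eigenbranch (fun i j => (hU i j).differentiableAt)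
        (hΛ' ▸ hΛa.differentiableAt.hasDerivAt) hΛ0 hG hG0 (heigp s)
  have hTh s := (hchain s).1
  have hTk s := (hchain s).2
  have hbound : ∀ m, finrank ℂ (LinearMap.ker (T ^ m)) ≤ 2 * Fintype.card (Fin N) := fun m => by
    simpa [halg] using (U z₀).finrank_ker_toLin'_sub_smul_one_pow_le lam₀ m
  refine ⟨?_, ?_, ?_⟩
  · simpa using End.finrank_ker_eq_of_jordan_chains hTh hTk hc hind (hbound 2)
  · simpa using End.finrank_ker_sq_eq_of_jordan_chains hTh hTk hc hind (hbound 2)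
  · exact End.ker_pow_three_eq_ker_sq_of_jordan_chains hTh hTk hc hind hbound

/-- Eigenvalue-perturbation lemma: under hypotheses (E1)–(E2) (a `λ₀`-group of `2N`
simple eigenvalues forming `N` period-2 cycles with Puiseux expansions
`λ₀ ± c_s w + O(w²)` in `w = (z-z₀)^{1/2}`, eigenvectors `h_s + w k + O(w²)` with
`h_1, …, h_N` linearly independent), the Jordan blocks of `U(z₀)` for `λ₀` are
exactly `N` blocks of size `2 × 2`. -/
theorem stmt4 (p N : ℕ) (z₀ lam₀ : ℂ)
    (U : ℂ → Matrix (Fin p) (Fin p) ℂ)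
    (hU : ∀ i j, AnalyticAt ℂ (fun z => U z i j) z₀)
    (Λp Λm : Fin N → ℂ → ℂ) (c : Fin N → ℂ) (hc : ∀ s, c s ≠ 0)
    (Gp Gm : Fin N → ℂ → (Fin p → ℂ))
    (h kp km : Fin N → (Fin p → ℂ))
    (hΛp : ∀ s, AnalyticAt ℂ (Λp s) 0 ∧ Λp s 0 = lam₀ ∧ deriv (Λp s) 0 = c s)
    (hΛm : ∀ s, AnalyticAt ℂ (Λm s) 0 ∧ Λm s 0 = lam₀ ∧ deriv (Λm s) 0 = -c s)
    (hGp : ∀ s i, AnalyticAt ℂ (fun w => Gp s w i) 0 ∧ Gp s 0 i = h s i ∧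
      deriv (fun w => Gp s w i) 0 = kp s i)
    (hGm : ∀ s i, AnalyticAt ℂ (fun w => Gm s w i) 0 ∧ Gm s 0 i = h s i ∧
      deriv (fun w => Gm s w i) 0 = km s i)
    (heigp : ∀ s, ∀ᶠ w in nhds (0 : ℂ),
      (U (z₀ + w ^ 2)).mulVec (Gp s w) = Λp s w • Gp s w)
    (heigm : ∀ s, ∀ᶠ w in nhds (0 : ℂ),
      (U (z₀ + w ^ 2)).mulVec (Gm s w) = Λm s w • Gm s w)
    (hind : LinearIndependent ℂ h)
    (hdistinct : ∀ᶠ w in nhdsWithin (0 : ℂ) {(0 : ℂ)}ᶜ,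
      Function.Injective (Sum.elim (fun s : Fin N => Λp s w) (fun s : Fin N => Λm s w)))
    (halg : ((U z₀).charpoly).rootMultiplicity lam₀ = 2 * N) :
    Module.finrank ℂ (LinearMap.ker (Matrix.toLin' (U z₀ - lam₀ • 1))) = N ∧
    Module.finrank ℂ (LinearMap.ker ((Matrix.toLin' (U z₀ - lam₀ • 1)) ^ 2)) = 2 * N ∧
    LinearMap.ker ((Matrix.toLin' (U z₀ - lam₀ • 1)) ^ 3)
      = LinearMap.ker ((Matrix.toLin' (U z₀ - lam₀ • 1)) ^ 2) :=
  stmt4_general p N z₀ lam₀ U hU Λp c hc Gp h kp hΛp hGp heigp hind halg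
end

section
/- Under hypotheses (E1)–(E2) of the preceding eigenvalue perturbation setup, for each s the vector (k_{2s} − k_{2s+1})/(2 c_s) is a generalized eigenvector: U(z₀)·((k_{2s} − k_{2s+1})/(2c_s)) = h_s + λ₀·((k_{2s} − k_{2s+1})/(2c_s)), and in particular k_{2s} ≠ k_{2s+1}. -/
/-!
Differentiate the eigenvalue equation `U(z₀ + w²) g(w) = λ(w) g(w)` at `w = 0`. Since `w ↦ z₀ + w²`
is stationary at `0`, the matrix factor contributes nothing, leaving `U(z₀) k = λ'(0) h + λ₀ k`.
The two branches have `λ'(0) = ±c`, so subtracting them gives `U(z₀)(k₁ - k₂) = 2c h + λ₀ (k₁ - k₂)`,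
and `k₁ = k₂` would force `h = 0`.
-/

open Filter Matrix

theorem hasDerivAt_comp_add_sq {𝕜 F : Type*} [NontriviallyNormedField 𝕜] [NormedAddCommGroup F]
    [NormedSpace 𝕜 F] {f : 𝕜 → F} {z₀ : 𝕜} (hf : DifferentiableAt 𝕜 f z₀) :
    HasDerivAt (fun w => f (z₀ + w ^ 2)) 0 0 := by
  have hq : HasDerivAt (fun w : 𝕜 => z₀ + w ^ 2) 0 0 := by
    simpa using ((hasDerivAt_pow 2 (0 : 𝕜)).const_add z₀)
  have hf' : HasDerivAt f (deriv f z₀) (z₀ + (0 : 𝕜) ^ 2) := by simpa using hf.hasDerivAt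
  simpa [Function.comp_def] using hf'.scomp 0 hq

theorem Matrix.mulVec_eq_of_hasDerivAt_of_eventually_eigen {𝕜 n : Type*} [NontriviallyNormedField 𝕜]
    [Fintype n] {M : 𝕜 → Matrix n n 𝕜} {g : 𝕜 → n → 𝕜} {l : 𝕜 → 𝕜} {x d : 𝕜} {k : n → 𝕜}
    (hM : ∀ i j, HasDerivAt (fun w => M w i j) 0 x)
    (hg : ∀ i, HasDerivAt (fun w => g w i) (k i) x) (hl : HasDerivAt l d x)
    (heig : ∀ᶠ w in nhds x, M w *ᵥ g w = l w • g w) :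
    M x *ᵥ k = d • g x + l x • k := by
  funext i
  have hL : HasDerivAt (fun w => (M w *ᵥ g w) i) (∑ j, (0 * g x j + M x i j * k j)) x :=
    HasDerivAt.fun_sum fun j _ => (hM i j).mul (hg j)
  have hR : HasDerivAt (fun w => (l w • g w) i) (d * g x i + l x * k i) x := hl.mul (hg i)
  have hR' := hR.congr_of_eventuallyEq (heig.mono fun w hw => congrFun hw i)
  simpa [Matrix.mulVec, dotProduct] using hL.unique hR'

/-- In the perturbation setup, `(k_{2s} - k_{2s+1})/(2c_s)` is a generalized eigenvector:
`U(z₀)·v = h + λ₀·v` where `v = (k₁ - k₂)/(2c)`, and in particular `k₁ ≠ k₂`. -/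
theorem stmt5 (p : ℕ) (z₀ lam₀ c : ℂ) (hc : c ≠ 0)
    (U : ℂ → Matrix (Fin p) (Fin p) ℂ)
    (hU : ∀ i j, AnalyticAt ℂ (fun z => U z i j) z₀)
    (lp lm : ℂ → ℂ) (g1 g2 : ℂ → Fin p → ℂ) (h k1 k2 : Fin p → ℂ) (hh : h ≠ 0)
    (hlp : AnalyticAt ℂ lp 0 ∧ lp 0 = lam₀ ∧ deriv lp 0 = c)
    (hlm : AnalyticAt ℂ lm 0 ∧ lm 0 = lam₀ ∧ deriv lm 0 = -c)
    (hg1 : ∀ i, AnalyticAt ℂ (fun w => g1 w i) 0 ∧ g1 0 i = h i ∧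
      deriv (fun w => g1 w i) 0 = k1 i)
    (hg2 : ∀ i, AnalyticAt ℂ (fun w => g2 w i) 0 ∧ g2 0 i = h i ∧
      deriv (fun w => g2 w i) 0 = k2 i)
    (he1 : ∀ᶠ w in nhds (0 : ℂ), (U (z₀ + w ^ 2)).mulVec (g1 w) = lp w • g1 w)
    (he2 : ∀ᶠ w in nhds (0 : ℂ), (U (z₀ + w ^ 2)).mulVec (g2 w) = lm w • g2 w) :
    (U z₀).mulVec ((2 * c)⁻¹ • (k1 - k2)) = h + lam₀ • ((2 * c)⁻¹ • (k1 - k2)) ∧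
      k1 ≠ k2 := by
  have hUsq : ∀ i j, HasDerivAt (fun w => U (z₀ + w ^ 2) i j) 0 0 := fun i j =>
    hasDerivAt_comp_add_sq (hU i j).differentiableAt
  have hk1 : U z₀ *ᵥ k1 = c • h + lam₀ • k1 := by
    have := mulVec_eq_of_hasDerivAt_of_eventually_eigen hUsq
      (fun i => (hg1 i).2.2 ▸ (hg1 i).1.differentiableAt.hasDerivAt)
      (hlp.2.2 ▸ hlp.1.differentiableAt.hasDerivAt) he1
    simpa [funext fun i => (hg1 i).2.1, hlp.2.1] using this
  have hk2 : U z₀ *ᵥ k2 = (-c) • h + lam₀ • k2 := by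
    have := mulVec_eq_of_hasDerivAt_of_eventually_eigen hUsq
      (fun i => (hg2 i).2.2 ▸ (hg2 i).1.differentiableAt.hasDerivAt)
      (hlm.2.2 ▸ hlm.1.differentiableAt.hasDerivAt) he2
    simpa [funext fun i => (hg2 i).2.1, hlm.2.1] using this
  have hdiff : U z₀ *ᵥ (k1 - k2) = (2 * c) • h + lam₀ • (k1 - k2) := by
    rw [mulVec_sub, hk1, hk2]
    module
  have h2c : (2 * c) ≠ 0 := mul_ne_zero two_ne_zero hc
  refine ⟨?_, fun hk => hh ?_⟩
  · rw [mulVec_smul, hdiff, smul_add, smul_smul, inv_mul_cancel₀ h2c, one_smul, smul_comm]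
  · rw [hk, sub_self, mulVec_zero, smul_zero, add_zero, eq_comm, smul_eq_zero] at hdiff
    exact hdiff.resolve_left h2c
end

section
/- Let u(z) be a p×p matrix-valued function analytic at z₀ with det u not identically zero, and suppose z₀ is a zero of det u of order k > 0. Then dim ker u(z₀) = k if and only if u(z)^{-1} has a pole of order exactly 1 at z₀. In that case, ker(Res_{z=z₀} u(z)^{-1}) = Ran u(z₀) and Ran(Res_{z=z₀} u(z)^{-1}) = ker u(z₀). -/
/-!
Let `P` be a projection onto `ker u(z₀)`. Since `u(z₀) P = 0`, one can factor
`u(z) = w(z) (1 - P + (z - z₀) P)` with `w` analytic, so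
`det u(z) = (z - z₀) ^ dim ker u(z₀) * det w(z)`. Hence `dim ker u(z₀) ≤ k`, with equality iff
`w(z₀)` is invertible. In that case `(z - z₀) u(z)⁻¹ = ((z - z₀)(1 - P) + P) w(z)⁻¹` tends to
`P w(z₀)⁻¹ ≠ 0`.

Conversely, any limit `L` of `(z - z₀) u(z)⁻¹` satisfies `L u(z₀) = u(z₀) L = 0` and
`ker u(z₀) ⊆ ran L`. So `ran L = ker u(z₀)`, and counting dimensions gives `ker L = ran u(z₀)`.
Finally `L w(z₀) = P`, so a kernel vector of `w(z₀)` is killed by `P` and yet lies in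
`ran L = ran P`; thus `w(z₀)` is invertible and `dim ker u(z₀) = k`.
-/

open Filter Topology Matrix Module

namespace Matrix

variable {ι κ R : Type*}

/-- For idempotent `P` this acts as `c` on `range P` and as the identity on `ker P`: with `P`
projecting onto `ker u(z₀)`, `dilate P (z - z₀)` is the diagonal factor of the local Smith form. -/
def dilate [DecidableEq ι] [CommRing R] (P : Matrix ι ι R) (c : R) : Matrix ι ι R :=
  1 - P + c • P

section CommRing

variable [DecidableEq ι] [CommRing R] {P : Matrix ι ι R}

theorem dilate_zero (P : Matrix ι ι R) : dilate P 0 = 1 - P := by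
  simp [dilate]

theorem dilate_one (P : Matrix ι ι R) : dilate P 1 = 1 := by
  simp [dilate]

theorem dilate_one_sub (P : Matrix ι ι R) (c : R) : dilate (1 - P) c = c • (1 - P) + P := by
  rw [dilate, sub_sub_cancel, add_comm]

theorem continuous_dilate [TopologicalSpace R] [IsTopologicalRing R] (P : Matrix ι ι R) :
    Continuous (dilate P) :=
  continuous_const.add (continuous_id.smul continuous_const)

variable [Fintype ι]

theorem dilate_mul_dilate (hP : IsIdempotentElem P) (a b : R) :
    dilate P a * dilate P b = dilate P (a * b) := by
  have hP' : P * P = P := hP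
  simp only [dilate, sub_mul, add_mul, mul_sub, mul_add, Matrix.one_mul, Matrix.mul_one,
    Matrix.smul_mul, Matrix.mul_smul, hP', smul_smul]
  module

variable [Fintype κ] [DecidableEq κ] {A : Matrix ι κ R} {B : Matrix κ ι R}

theorem det_dilate_mul_of_mul_eq_one (hBA : B * A = 1) (c : R) :
    (dilate (A * B) c).det = c ^ Fintype.card κ := by
  have h : dilate (A * B) c = 1 + ((c - 1) • A) * B := by
    rw [dilate, Matrix.smul_mul, sub_smul, one_smul]; abel
  rw [h, det_one_add_mul_comm, Matrix.mul_smul, hBA, sub_smul, one_smul, add_sub_cancel,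
    det_smul, det_one, mul_one]

end CommRing

theorem isIdempotentElem_mul_of_mul_eq_one [Fintype ι] [Fintype κ] [DecidableEq κ] [Semiring R]
    {A : Matrix ι κ R} {B : Matrix κ ι R} (hBA : B * A = 1) : IsIdempotentElem (A * B) := by
  rw [IsIdempotentElem, Matrix.mul_assoc, ← Matrix.mul_assoc B, hBA, Matrix.one_mul]

section Field

variable [DecidableEq ι] [Field R] {P : Matrix ι ι R} {c : R}

theorem smul_dilate_inv (P : Matrix ι ι R) (hc : c ≠ 0) :
    c • dilate P c⁻¹ = dilate (1 - P) c := by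
  rw [dilate, dilate_one_sub, smul_add, smul_smul, mul_inv_cancel₀ hc, one_smul]

variable [Fintype ι]

theorem inv_dilate (hP : IsIdempotentElem P) (hc : c ≠ 0) : (dilate P c)⁻¹ = dilate P c⁻¹ :=
  inv_eq_right_inv (by rw [dilate_mul_dilate hP, mul_inv_cancel₀ hc, dilate_one])

theorem smul_inv_mul_dilate (hP : IsIdempotentElem P) (hc : c ≠ 0) (w : Matrix ι ι R) :
    c • (w * dilate P c)⁻¹ = dilate (1 - P) c * w⁻¹ := by
  rw [mul_inv_rev, inv_dilate hP hc, ← Matrix.smul_mul, smul_dilate_inv P hc]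

theorem mul_eq_zero_of_range_le_ker {M N : Matrix ι ι R}
    (h : LinearMap.range (toLin' N) ≤ LinearMap.ker (toLin' M)) : M * N = 0 :=
  toLin'.injective (by rw [toLin'_mul, LinearMap.range_le_ker_iff.1 h, map_zero])

variable [Fintype κ] [DecidableEq κ] {A : Matrix ι κ R} {B : Matrix κ ι R}

theorem exists_mul_eq_one_and_range_eq (K : Submodule R (ι → R)) :
    ∃ (A : Matrix ι (Fin (finrank R K)) R) (B : Matrix (Fin (finrank R K)) ι R),
      B * A = 1 ∧ LinearMap.range (toLin' A) = K := by
  let e := (Module.finBasis R K).equivFun.symm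
  let φ := K.subtype ∘ₗ e.toLinearMap
  obtain ⟨ψ, hψ⟩ := φ.exists_leftInverse_of_injective
    (LinearMap.ker_eq_bot.2 (Subtype.val_injective.comp e.injective))
  refine ⟨LinearMap.toMatrix' φ, LinearMap.toMatrix' ψ, ?_, ?_⟩
  · rw [← LinearMap.toMatrix'_comp, hψ, LinearMap.toMatrix'_id]
  · rw [toLin'_toMatrix', LinearMap.range_comp_of_range_eq_top _ e.range,
      Submodule.range_subtype]

theorem range_toLin'_mul_of_mul_eq_one (hBA : B * A = 1) :
    LinearMap.range (toLin' (A * B)) = LinearMap.range (toLin' A) := by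
  refine le_antisymm (by rw [toLin'_mul]; exact LinearMap.range_comp_le_range _ _) ?_
  rintro _ ⟨x, rfl⟩
  refine ⟨A *ᵥ x, ?_⟩
  rw [toLin'_apply, toLin'_apply, mulVec_mulVec, Matrix.mul_assoc, hBA, Matrix.mul_one]

theorem exists_isIdempotentElem_range_eq (K : Submodule R (ι → R)) :
    ∃ P : Matrix ι ι R, IsIdempotentElem P ∧ LinearMap.range (toLin' P) = K ∧
      ∀ c, (dilate P c).det = c ^ finrank R K := by
  obtain ⟨A, B, hBA, hA⟩ := exists_mul_eq_one_and_range_eq K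
  refine ⟨A * B, isIdempotentElem_mul_of_mul_eq_one hBA,
    (range_toLin'_mul_of_mul_eq_one hBA).trans hA, fun c => ?_⟩
  rw [det_dilate_mul_of_mul_eq_one hBA, Fintype.card_fin]

end Field

end Matrix

theorem Filter.Tendsto.mulVec_const {α R m n : Type*} [Fintype n] [NonUnitalNonAssocSemiring R]
    [TopologicalSpace R] [IsTopologicalSemiring R] {l : Filter α} {M : α → Matrix m n R}
    {L : Matrix m n R} (h : Tendsto M l (𝓝 L)) (x : n → R) :
    Tendsto (fun a => M a *ᵥ x) l (𝓝 (L *ᵥ x)) :=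
  ((continuous_id.matrix_mulVec continuous_const).tendsto L).comp h

section LocalFactorization

variable {𝕜 : Type*} [NontriviallyNormedField 𝕜] {z₀ : 𝕜}

theorem tendsto_sub_nhdsNE_zero (z₀ : 𝕜) : Tendsto (fun z => z - z₀) (𝓝[≠] z₀) (𝓝 0) :=
  ((continuous_sub_right z₀).tendsto' z₀ 0 (sub_self z₀)).mono_left nhdsWithin_le_nhds

theorem Matrix.tendsto_dilate_one_sub {ι : Type*} [DecidableEq ι] (P : Matrix ι ι 𝕜) (z₀ : 𝕜) :
    Tendsto (fun z => dilate (1 - P) (z - z₀)) (𝓝[≠] z₀) (𝓝 P) := by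
  have h := ((continuous_dilate (1 - P)).tendsto 0).comp (tendsto_sub_nhdsNE_zero z₀)
  rwa [dilate_zero, sub_sub_cancel] at h

theorem ContinuousAt.of_eq_add_sub_smul {E : Type*} [TopologicalSpace E] [AddCommGroup E]
    [Module 𝕜 E] [ContinuousAdd E] [ContinuousSMul 𝕜 E] {f g : 𝕜 → E}
    (h : ∀ z, f z = f z₀ + (z - z₀) • g z) (hg : ContinuousAt g z₀) : ContinuousAt f z₀ := by
  rw [show f = fun z => f z₀ + (z - z₀) • g z from funext h]
  exact continuousAt_const.add ((continuous_sub_right z₀).continuousAt.smul hg)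

theorem AnalyticAt.dslope {E : Type*} [NormedAddCommGroup E] [NormedSpace 𝕜 E] {f : 𝕜 → E}
    (hf : AnalyticAt 𝕜 f z₀) : AnalyticAt 𝕜 (dslope f z₀) z₀ :=
  let ⟨_, hp⟩ := hf
  hp.has_fpower_series_dslope_fslope.analyticAt

variable {m n : Type*} {u : 𝕜 → Matrix m n 𝕜}

theorem Matrix.continuousAt_of_analyticAt_apply
    (hu : ∀ i j, AnalyticAt 𝕜 (fun z => u z i j) z₀) : ContinuousAt u z₀ :=
  continuousAt_pi.2 fun i => continuousAt_pi.2 fun j => (hu i j).continuousAt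

theorem Matrix.exists_eq_add_sub_smul_of_analyticAt_apply
    (hu : ∀ i j, AnalyticAt 𝕜 (fun z => u z i j) z₀) :
    ∃ v : 𝕜 → Matrix m n 𝕜, (∀ i j, AnalyticAt 𝕜 (fun z => v z i j) z₀) ∧
      ∀ z, u z = u z₀ + (z - z₀) • v z :=
  ⟨fun z => of fun i j => dslope (fun ζ => u ζ i j) z₀ z, fun i j => (hu i j).dslope,
    fun z => by
      ext i j
      simp only [add_apply, smul_apply, of_apply]
      rw [sub_smul_dslope, add_sub_cancel]⟩

theorem Matrix.exists_eq_mul_dilate [Fintype m] [DecidableEq m] {u : 𝕜 → Matrix m m 𝕜}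
    (hu : ∀ i j, AnalyticAt 𝕜 (fun z => u z i j) z₀) {P : Matrix m m 𝕜}
    (hP : IsIdempotentElem P) (huP : u z₀ * P = 0) :
    ∃ w H : 𝕜 → Matrix m m 𝕜, (∀ z, u z = w z * dilate P (z - z₀)) ∧
      (∀ z, w z = w z₀ + (z - z₀) • H z) ∧ ContinuousAt H z₀ := by
  obtain ⟨v, hv, huv⟩ := exists_eq_add_sub_smul_of_analyticAt_apply hu
  obtain ⟨v₂, hv₂, hvv⟩ := exists_eq_add_sub_smul_of_analyticAt_apply hv
  have hP' : P * P = P := hP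
  refine ⟨fun z => u z * (1 - P) + v z * P, fun z => v z * (1 - P) + v₂ z * P,
    fun z => ?_, fun z => ?_, ?_⟩
  · have h : u z * P = (z - z₀) • (v z * P) := by
      rw [huv z, add_mul, huP, zero_add, smul_mul]
    calc u z = u z * (1 - P) + (z - z₀) • (v z * P) := by
          rw [← h, mul_sub, Matrix.mul_one, sub_add_cancel]
      _ = (u z * (1 - P) + v z * P) * dilate P (z - z₀) := by
          simp only [dilate, mul_add, mul_sub, add_mul, sub_mul, Matrix.mul_one,
            Matrix.mul_smul, Matrix.mul_assoc, hP']
          module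
  · show u z * (1 - P) + v z * P =
      u z₀ * (1 - P) + v z₀ * P + (z - z₀) • (v z * (1 - P) + v₂ z * P)
    rw [huv z, hvv z]
    simp only [add_mul, Matrix.smul_mul]
    module
  · exact ((continuousAt_of_analyticAt_apply hv).mul continuousAt_const).add
      ((continuousAt_of_analyticAt_apply hv₂).mul continuousAt_const)

end LocalFactorization

section PoleOrder

variable {𝕜 : Type*} [NontriviallyNormedField 𝕜] {z₀ : 𝕜} {f g : 𝕜 → 𝕜} {n k : ℕ}

theorem le_of_mul_sub_pow_eventuallyEq (hf : ContinuousAt f z₀) (hg : ContinuousAt g z₀)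
    (hg₀ : g z₀ ≠ 0) (h : ∀ᶠ z in 𝓝 z₀, f z * (z - z₀) ^ n = (z - z₀) ^ k * g z) : n ≤ k := by
  by_contra! hkn
  have hfg : g =ᶠ[𝓝[≠] z₀] fun z => f z * (z - z₀) ^ (n - k) := by
    filter_upwards [nhdsWithin_le_nhds h, self_mem_nhdsWithin] with z hz hne
    refine mul_left_cancel₀ (pow_ne_zero k (sub_ne_zero.2 hne)) ?_
    rw [← hz, mul_left_comm, ← pow_add, Nat.add_sub_cancel' hkn.le]
  have hlim := hf.continuousWithinAt.tendsto.mul ((tendsto_sub_nhdsNE_zero z₀).pow (n - k))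
  rw [zero_pow (Nat.sub_ne_zero_of_lt hkn), mul_zero] at hlim
  exact hg₀ (tendsto_nhds_unique hg.continuousWithinAt.tendsto (hlim.congr' hfg.symm))

theorem eq_zero_pow_mul_of_mul_sub_pow_eventuallyEq (hf : ContinuousAt f z₀)
    (hg : ContinuousAt g z₀) (hg₀ : g z₀ ≠ 0)
    (h : ∀ᶠ z in 𝓝 z₀, f z * (z - z₀) ^ n = (z - z₀) ^ k * g z) :
    f z₀ = 0 ^ (k - n) * g z₀ := by
  have hnk := le_of_mul_sub_pow_eventuallyEq hf hg hg₀ h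
  have hfg : f =ᶠ[𝓝[≠] z₀] fun z => (z - z₀) ^ (k - n) * g z := by
    filter_upwards [nhdsWithin_le_nhds h, self_mem_nhdsWithin] with z hz hne
    refine mul_right_cancel₀ (pow_ne_zero n (sub_ne_zero.2 hne)) ?_
    rw [hz, mul_right_comm, ← pow_add, Nat.sub_add_cancel hnk]
  exact tendsto_nhds_unique (hf.continuousWithinAt.tendsto.congr' hfg)
    (((tendsto_sub_nhdsNE_zero z₀).pow (k - n)).mul hg.continuousWithinAt.tendsto)

theorem ne_zero_iff_of_mul_sub_pow_eventuallyEq (hf : ContinuousAt f z₀)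
    (hg : ContinuousAt g z₀) (hg₀ : g z₀ ≠ 0)
    (h : ∀ᶠ z in 𝓝 z₀, f z * (z - z₀) ^ n = (z - z₀) ^ k * g z) : f z₀ ≠ 0 ↔ n = k := by
  have hnk := le_of_mul_sub_pow_eventuallyEq hf hg hg₀ h
  rw [eq_zero_pow_mul_of_mul_sub_pow_eventuallyEq hf hg hg₀ h, mul_ne_zero_iff_right hg₀,
    Ne, zero_pow_eq_zero, not_not]
  omega

theorem eventually_nhdsNE_ne_zero_of_eq_pow_mul (hg : ContinuousAt g z₀) (hg₀ : g z₀ ≠ 0)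
    (h : ∀ᶠ z in 𝓝 z₀, f z = (z - z₀) ^ k * g z) : ∀ᶠ z in 𝓝[≠] z₀, f z ≠ 0 := by
  filter_upwards [nhdsWithin_le_nhds h, nhdsWithin_le_nhds (hg.eventually_ne hg₀),
    self_mem_nhdsWithin] with z hz hgz hne
  rw [hz]
  exact mul_ne_zero (pow_ne_zero _ (sub_ne_zero.2 hne)) hgz

end PoleOrder

section Residue

variable {𝕜 ι : Type*} [NontriviallyNormedField 𝕜] [Fintype ι] [DecidableEq ι]
  {u : 𝕜 → Matrix ι ι 𝕜} {z₀ : 𝕜} {L : Matrix ι ι 𝕜}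

theorem mul_eq_zero_and_mul_eq_zero_of_tendsto_sub_smul_inv (hu : ContinuousAt u z₀)
    (hinv : ∀ᶠ z in 𝓝[≠] z₀, IsUnit (u z).det)
    (hL : Tendsto (fun z => (z - z₀) • (u z)⁻¹) (𝓝[≠] z₀) (𝓝 L)) :
    L * u z₀ = 0 ∧ u z₀ * L = 0 := by
  have h0 : Tendsto (fun z => (z - z₀) • (1 : Matrix ι ι 𝕜)) (𝓝[≠] z₀) (𝓝 0) := by
    simpa using (tendsto_sub_nhdsNE_zero z₀).smul_const (1 : Matrix ι ι 𝕜)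
  constructor
  · refine tendsto_nhds_unique ((hL.mul hu.continuousWithinAt.tendsto).congr' ?_) h0
    filter_upwards [hinv] with z hz
    rw [Matrix.smul_mul, nonsing_inv_mul _ hz]
  · refine tendsto_nhds_unique ((hu.continuousWithinAt.tendsto.mul hL).congr' ?_) h0
    filter_upwards [hinv] with z hz
    rw [Matrix.mul_smul, mul_nonsing_inv _ hz]

theorem ker_le_range_of_tendsto_sub_smul_inv {v : 𝕜 → Matrix ι ι 𝕜}
    (huv : ∀ z, u z = u z₀ + (z - z₀) • v z) (hv : ContinuousAt v z₀)
    (hinv : ∀ᶠ z in 𝓝[≠] z₀, IsUnit (u z).det)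
    (hL : Tendsto (fun z => (z - z₀) • (u z)⁻¹) (𝓝[≠] z₀) (𝓝 L)) :
    LinearMap.ker (toLin' (u z₀)) ≤ LinearMap.range (toLin' L) := by
  intro x hx
  rw [LinearMap.mem_ker, toLin'_apply] at hx
  have h : (fun _ => x) =ᶠ[𝓝[≠] z₀] fun z => ((z - z₀) • (u z)⁻¹ * v z) *ᵥ x := by
    filter_upwards [hinv] with z hz
    calc x = (u z)⁻¹ *ᵥ (u z *ᵥ x) := by rw [mulVec_mulVec, nonsing_inv_mul _ hz, one_mulVec]
      _ = ((z - z₀) • (u z)⁻¹ * v z) *ᵥ x := by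
        rw [huv z, add_mulVec, hx, zero_add, smul_mulVec, mulVec_smul, mulVec_mulVec,
          Matrix.smul_mul, smul_mulVec]
  have hx' := tendsto_nhds_unique ((hL.mul hv.continuousWithinAt.tendsto).mulVec_const x)
    (tendsto_const_nhds.congr' h)
  exact ⟨v z₀ *ᵥ x, by rw [toLin'_apply, mulVec_mulVec, hx']⟩

theorem range_eq_ker_of_tendsto_sub_smul_inv {v : 𝕜 → Matrix ι ι 𝕜}
    (huv : ∀ z, u z = u z₀ + (z - z₀) • v z) (hv : ContinuousAt v z₀)
    (hinv : ∀ᶠ z in 𝓝[≠] z₀, IsUnit (u z).det)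
    (hL : Tendsto (fun z => (z - z₀) • (u z)⁻¹) (𝓝[≠] z₀) (𝓝 L)) :
    LinearMap.range (toLin' L) = LinearMap.ker (toLin' (u z₀)) := by
  have huL := (mul_eq_zero_and_mul_eq_zero_of_tendsto_sub_smul_inv
    (hv.of_eq_add_sub_smul huv) hinv hL).2
  refine le_antisymm ?_ (ker_le_range_of_tendsto_sub_smul_inv huv hv hinv hL)
  rw [LinearMap.range_le_ker_iff, ← toLin'_mul, huL, map_zero]

theorem ker_eq_range_of_tendsto_sub_smul_inv {v : 𝕜 → Matrix ι ι 𝕜}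
    (huv : ∀ z, u z = u z₀ + (z - z₀) • v z) (hv : ContinuousAt v z₀)
    (hinv : ∀ᶠ z in 𝓝[≠] z₀, IsUnit (u z).det)
    (hL : Tendsto (fun z => (z - z₀) • (u z)⁻¹) (𝓝[≠] z₀) (𝓝 L)) :
    LinearMap.ker (toLin' L) = LinearMap.range (toLin' (u z₀)) := by
  have hLu := (mul_eq_zero_and_mul_eq_zero_of_tendsto_sub_smul_inv
    (hv.of_eq_add_sub_smul huv) hinv hL).1
  have hrange := range_eq_ker_of_tendsto_sub_smul_inv huv hv hinv hL
  refine (Submodule.eq_of_le_of_finrank_eq ?_ ?_).symm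
  · rw [LinearMap.range_le_ker_iff, ← toLin'_mul, hLu, map_zero]
  · have h₁ := LinearMap.finrank_range_add_finrank_ker (toLin' L)
    have h₂ := LinearMap.finrank_range_add_finrank_ker (toLin' (u z₀))
    rw [hrange] at h₁
    omega

end Residue

section SimplePole

variable {𝕜 ι : Type*} [NontriviallyNormedField 𝕜] [Fintype ι] [DecidableEq ι]
  {u w : 𝕜 → Matrix ι ι 𝕜} {P : Matrix ι ι 𝕜} {z₀ : 𝕜}

theorem tendsto_sub_smul_inv_of_eq_mul_dilate (hP : IsIdempotentElem P)
    (huw : ∀ z, u z = w z * dilate P (z - z₀)) (hw : ContinuousAt w z₀)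
    (hw₀ : (w z₀).det ≠ 0) :
    Tendsto (fun z => (z - z₀) • (u z)⁻¹) (𝓝[≠] z₀) (𝓝 (P * (w z₀)⁻¹)) := by
  have h : (fun z => dilate (1 - P) (z - z₀) * (w z)⁻¹) =ᶠ[𝓝[≠] z₀]
      fun z => (z - z₀) • (u z)⁻¹ := by
    filter_upwards [self_mem_nhdsWithin] with z hz
    rw [huw z, smul_inv_mul_dilate hP (sub_ne_zero.2 hz)]
  have hinv : ContinuousAt (fun z => (w z)⁻¹) z₀ :=
    (continuousAt_matrix_inv _ (by rw [Ring.inverse_eq_inv']; exact continuousAt_inv₀ hw₀)).comp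
      hw
  exact ((tendsto_dilate_one_sub P z₀).mul hinv.continuousWithinAt.tendsto).congr' h

/-- A vector `x` with `w(z₀) x = 0` satisfies `P x = L w(z₀) x = 0`, while dividing
`(z - z₀) u(z)⁻¹ w(z) x = (z - z₀) x - (z - z₀) P x + P x` by `z - z₀` shows that
`x = lim (z - z₀) u(z)⁻¹ H(z) x` lies in `range L ⊆ range P`. -/
theorem isUnit_det_of_tendsto_sub_smul_inv {H : 𝕜 → Matrix ι ι 𝕜} {L : Matrix ι ι 𝕜}
    (hP : IsIdempotentElem P) (huw : ∀ z, u z = w z * dilate P (z - z₀))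
    (hwH : ∀ z, w z = w z₀ + (z - z₀) • H z) (hH : ContinuousAt H z₀)
    (hinv : ∀ᶠ z in 𝓝[≠] z₀, IsUnit (u z).det)
    (hL : Tendsto (fun z => (z - z₀) • (u z)⁻¹) (𝓝[≠] z₀) (𝓝 L))
    (hLP : LinearMap.range (toLin' L) ≤ LinearMap.range (toLin' P)) :
    IsUnit (w z₀).det := by
  have hkey : ∀ᶠ z in 𝓝[≠] z₀, (z - z₀) • (u z)⁻¹ * w z = dilate (1 - P) (z - z₀) := by
    filter_upwards [hinv, self_mem_nhdsWithin] with z hz hne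
    rw [huw z, det_mul] at hz
    rw [huw z, smul_inv_mul_dilate hP (sub_ne_zero.2 hne), Matrix.mul_assoc,
      nonsing_inv_mul _ (isUnit_of_mul_isUnit_left hz), Matrix.mul_one]
  have hLw : L * w z₀ = P := tendsto_nhds_unique
    ((hL.mul (hH.of_eq_add_sub_smul hwH).continuousWithinAt.tendsto).congr' hkey)
    (tendsto_dilate_one_sub P z₀)
  refine isUnit_iff_ne_zero.2 fun h0 => ?_
  obtain ⟨x, hx0, hx⟩ := exists_mulVec_eq_zero_iff.2 h0
  have hPx : P *ᵥ x = 0 := by rw [← hLw, ← mulVec_mulVec, hx, mulVec_zero]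
  have h : (fun _ => x) =ᶠ[𝓝[≠] z₀] fun z => ((z - z₀) • (u z)⁻¹ * H z) *ᵥ x := by
    filter_upwards [hkey, self_mem_nhdsWithin] with z hz hne
    refine smul_right_injective _ (sub_ne_zero.2 hne) ?_
    have hwx : w z *ᵥ x = (z - z₀) • (H z *ᵥ x) := by
      rw [hwH z, add_mulVec, hx, zero_add, smul_mulVec]
    have := congrArg (· *ᵥ x) hz
    simp only [← mulVec_mulVec, hwx, mulVec_smul, dilate_one_sub, add_mulVec, smul_mulVec,
      sub_mulVec, one_mulVec, hPx, sub_zero, add_zero] at this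
    simpa only [← mulVec_mulVec, smul_mulVec] using this.symm
  have hx' := tendsto_nhds_unique ((hL.mul hH.continuousWithinAt.tendsto).mulVec_const x)
    (tendsto_const_nhds.congr' h)
  obtain ⟨y, hy⟩ := hLP ⟨H z₀ *ᵥ x, by rw [toLin'_apply, mulVec_mulVec, hx']⟩
  rw [toLin'_apply] at hy
  apply hx0
  rw [← hPx, ← hy, mulVec_mulVec, hP.eq]

end SimplePole

/-- If `u` is analytic at `z₀` with `det u` having a zero of order `k > 0` there, then
`dim ker u(z₀) = k` iff `u⁻¹` has a simple pole at `z₀`; and in that case the residue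
`L = lim (z-z₀)u(z)⁻¹` satisfies `ker L = Ran u(z₀)` and `Ran L = ker u(z₀)`. -/
theorem stmt6 (p k : ℕ) (hk : 0 < k) (z₀ : ℂ)
    (u : ℂ → Matrix (Fin p) (Fin p) ℂ)
    (hu : ∀ i j, AnalyticAt ℂ (fun z => u z i j) z₀)
    (d : ℂ → ℂ) (hd : AnalyticAt ℂ d z₀) (hd0 : d z₀ ≠ 0)
    (hdet : ∀ᶠ z in nhds z₀, (u z).det = (z - z₀) ^ k * d z) :
    (Module.finrank ℂ (LinearMap.ker (Matrix.toLin' (u z₀))) = k ↔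
      ∃ L : Matrix (Fin p) (Fin p) ℂ, L ≠ 0 ∧
        Tendsto (fun z => (z - z₀) • (u z)⁻¹) (nhdsWithin z₀ {z₀}ᶜ) (nhds L)) ∧
    (Module.finrank ℂ (LinearMap.ker (Matrix.toLin' (u z₀))) = k →
      ∀ L : Matrix (Fin p) (Fin p) ℂ,
        Tendsto (fun z => (z - z₀) • (u z)⁻¹) (nhdsWithin z₀ {z₀}ᶜ) (nhds L) →
        LinearMap.ker (Matrix.toLin' L) = LinearMap.range (Matrix.toLin' (u z₀)) ∧
        LinearMap.range (Matrix.toLin' L) = LinearMap.ker (Matrix.toLin' (u z₀))) := by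
  set K := LinearMap.ker (toLin' (u z₀))
  obtain ⟨v, hv, huv⟩ := exists_eq_add_sub_smul_of_analyticAt_apply hu
  replace hv := continuousAt_of_analyticAt_apply hv
  obtain ⟨P, hP, hPK, hdetP⟩ := exists_isIdempotentElem_range_eq K
  obtain ⟨w, H, huw, hwH, hH⟩ := exists_eq_mul_dilate hu hP (mul_eq_zero_of_range_le_ker hPK.le)
  have hw := hH.of_eq_add_sub_smul hwH
  have hdetw : ∀ᶠ z in 𝓝 z₀, (w z).det * (z - z₀) ^ finrank ℂ K = (z - z₀) ^ k * d z := by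
    filter_upwards [hdet] with z hz
    rw [← hz, huw z, det_mul, hdetP]
  have hw₀ : (w z₀).det ≠ 0 ↔ finrank ℂ K = k := ne_zero_iff_of_mul_sub_pow_eventuallyEq
    (continuous_id.matrix_det.continuousAt.comp hw) hd.continuousAt hd0 hdetw
  have hinv : ∀ᶠ z in 𝓝[≠] z₀, IsUnit (u z).det :=
    (eventually_nhdsNE_ne_zero_of_eq_pow_mul hd.continuousAt hd0 hdet).mono fun _ h => h.isUnit
  refine ⟨⟨fun hKk => ?_, fun ⟨L, _, hL⟩ => ?_⟩, fun _ L hL =>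
    ⟨ker_eq_range_of_tendsto_sub_smul_inv huv hv hinv hL,
      range_eq_ker_of_tendsto_sub_smul_inv huv hv hinv hL⟩⟩
  · have hP0 : P ≠ 0 := by
      rintro rfl
      rw [← hPK, map_zero, LinearMap.range_zero, finrank_bot] at hKk
      omega
    refine ⟨P * (w z₀)⁻¹, ?_, tendsto_sub_smul_inv_of_eq_mul_dilate hP huw hw (hw₀.2 hKk)⟩
    rwa [Ne, (isUnit_nonsing_inv_iff.2 ((isUnit_iff_isUnit_det _).2
      (hw₀.2 hKk).isUnit)).mul_left_eq_zero]
  · exact hw₀.1 (isUnit_det_of_tendsto_sub_smul_inv hP huw hwH hH hinv hL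
      ((range_eq_ker_of_tendsto_sub_smul_inv huv hv hinv hL).trans hPK.symm).le).ne_zero
end

section
/- There exist positive constants c̃₁, c̃₂ and a neighborhood V of the identity in the set of lower-triangular p×p complex matrices with positive diagonal, such that for all A ∈ V: c̃₁‖𝟙 − A‖ ≤ ‖𝟙 − AA*‖ ≤ c̃₂‖𝟙 − A‖. -/
attribute [local instance] Matrix.normedAddCommGroup

/-!
Write `A = 1 - B`. Then `1 - AAᴴ = (B + Bᴴ) - BBᴴ`, where the quadratic term is `O(‖B‖²)`.
The linear term is comparable to `‖B‖`: since `B` is lower triangular with self-adjoint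
diagonal, every entry of `B` reappears in `B + Bᴴ`, below the diagonal unchanged and on it
doubled. So near `B = 0` both bounds hold with `c₁ = 1/2` and `c₂ = 3`.
-/

namespace Matrix

variable {n α : Type*} [Fintype n]

theorem norm_mul_le_card_mul {l m : Type*} [Fintype l] [Fintype m] [NormedRing α]
    (A : Matrix l m α) (B : Matrix m n α) :
    ‖A * B‖ ≤ Fintype.card m * (‖A‖ * ‖B‖) := by
  rw [norm_le_iff (by positivity)]
  intro i j
  calc ‖(A * B) i j‖ = ‖∑ k, A i k * B k j‖ := rfl
    _ ≤ ∑ k, ‖A i k * B k j‖ := norm_sum_le _ _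
    _ ≤ ∑ _k : m, ‖A‖ * ‖B‖ := Finset.sum_le_sum fun k _ =>
        (norm_mul_le _ _).trans <| mul_le_mul (norm_entry_le_entrywise_sup_norm A)
          (norm_entry_le_entrywise_sup_norm B) (norm_nonneg _) (norm_nonneg _)
    _ = Fintype.card m * (‖A‖ * ‖B‖) := by simp

theorem one_sub_one_sub_mul_conjTranspose_one_sub [DecidableEq n] [Ring α] [StarRing α]
    (B : Matrix n n α) : 1 - (1 - B) * (1 - B)ᴴ = B + Bᴴ - B * Bᴴ := by
  simp only [conjTranspose_sub, conjTranspose_one]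
  noncomm_ring

theorem norm_le_norm_add_conjTranspose [LinearOrder n] [NormedAddCommGroup α]
    [NormedSpace ℝ α] [StarAddMonoid α] {B : Matrix n n α} (hlower : ∀ i j, i < j → B i j = 0)
    (hdiag : ∀ i, IsSelfAdjoint (B i i)) : ‖B‖ ≤ ‖B + Bᴴ‖ := by
  rw [norm_le_iff (norm_nonneg _)]
  intro i j
  refine le_trans ?_ (norm_entry_le_entrywise_sup_norm (B + Bᴴ) (i := i) (j := j))
  rcases lt_trichotomy i j with hij | rfl | hji
  · simp [hlower i j hij]
  · have hdouble : (B + Bᴴ) i i = (2 : ℝ) • B i i := by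
      rw [two_smul, add_apply, conjTranspose_apply, (hdiag i).star_eq]
    rw [hdouble, norm_smul, Real.norm_two]
    linarith [norm_nonneg (B i i)]
  · simp [hlower j i hji]

section NormedStarRing

variable [NormedRing α] [StarRing α] [NormedStarGroup α]

theorem norm_add_conjTranspose_sub_mul_conjTranspose_le (B : Matrix n n α) :
    ‖B + Bᴴ - B * Bᴴ‖ ≤ 2 * ‖B‖ + Fintype.card n * ‖B‖ ^ 2 := by
  have hquad := norm_mul_le_card_mul B Bᴴ
  rw [norm_conjTranspose] at hquad
  calc ‖B + Bᴴ - B * Bᴴ‖ ≤ ‖B‖ + ‖Bᴴ‖ + ‖B * Bᴴ‖ :=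
        (norm_sub_le _ _).trans (add_le_add_left (norm_add_le _ _) _)
    _ ≤ 2 * ‖B‖ + Fintype.card n * ‖B‖ ^ 2 := by rw [norm_conjTranspose]; nlinarith

theorem norm_sub_card_mul_sq_le_norm_add_conjTranspose_sub_mul_conjTranspose [LinearOrder n]
    [NormedSpace ℝ α] {B : Matrix n n α} (hlower : ∀ i j, i < j → B i j = 0)
    (hdiag : ∀ i, IsSelfAdjoint (B i i)) :
    ‖B‖ - Fintype.card n * ‖B‖ ^ 2 ≤ ‖B + Bᴴ - B * Bᴴ‖ := by
  have hquad := norm_mul_le_card_mul B Bᴴ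
  rw [norm_conjTranspose] at hquad
  have hlin := norm_le_norm_add_conjTranspose hlower hdiag
  have htriangle := norm_sub_norm_le (B + Bᴴ) (B * Bᴴ)
  nlinarith

end NormedStarRing

end Matrix

/-- Near the identity, on lower-triangular matrices with positive diagonal,
`‖𝟙 - A‖` and `‖𝟙 - AA*‖` are comparable: `c̃₁‖𝟙 - A‖ ≤ ‖𝟙 - AA*‖ ≤ c̃₂‖𝟙 - A‖`. -/
theorem stmt17 (p : ℕ) :
    ∃ c₁ c₂ ε : ℝ, 0 < c₁ ∧ 0 < c₂ ∧ 0 < ε ∧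
      ∀ A : Matrix (Fin p) (Fin p) ℂ,
        (∀ i j : Fin p, i < j → A i j = 0) →
        (∀ i : Fin p, 0 < (A i i).re ∧ (A i i).im = 0) →
        ‖(1 : Matrix (Fin p) (Fin p) ℂ) - A‖ < ε →
        c₁ * ‖(1 : Matrix (Fin p) (Fin p) ℂ) - A‖
            ≤ ‖(1 : Matrix (Fin p) (Fin p) ℂ) - A * A.conjTranspose‖ ∧
          ‖(1 : Matrix (Fin p) (Fin p) ℂ) - A * A.conjTranspose‖
            ≤ c₂ * ‖(1 : Matrix (Fin p) (Fin p) ℂ) - A‖ := by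
  refine ⟨1 / 2, 3, 1 / (2 * (p + 1)), by norm_num, by norm_num, by positivity, ?_⟩
  intro A hlower hdiag hsmall
  set B : Matrix (Fin p) (Fin p) ℂ := 1 - A
  have hB_lower : ∀ i j, i < j → B i j = 0 := fun i j hij => by
    simp [B, hij.ne, hlower i j hij]
  have hB_diag : ∀ i, IsSelfAdjoint (B i i) := fun i => by
    simp [B, IsSelfAdjoint, Complex.conj_eq_iff_im, (hdiag i).2]
  have hpB : p * ‖B‖ ≤ 1 / 2 := by
    rw [le_div_iff₀ two_pos]
    rw [lt_div_iff₀ (by positivity)] at hsmall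
    nlinarith [norm_nonneg B]
  have hlow := Matrix.norm_sub_card_mul_sq_le_norm_add_conjTranspose_sub_mul_conjTranspose
    hB_lower hB_diag
  have hup := Matrix.norm_add_conjTranspose_sub_mul_conjTranspose_le B
  rw [Fintype.card_fin] at hlow hup
  rw [show A = 1 - B by simp [B], Matrix.one_sub_one_sub_mul_conjTranspose_one_sub]
  constructor <;> nlinarith [norm_nonneg B]
end
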